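/- arXiv:1909.00678 — 4 statements merged into one kernel-verified Lean document; each statement's English description precedes it below -/
import Mathlib

section
/- For every x ∈ X, φ(x) ≤ ψ(x), where φ is the supremum function associated to Γ = { (f,a) ∈ S_F × ℝ : A ∩ H_{f,a} = ∅ } and ψ is the F-distance from x to A. -/
/-!
For `(f, a) ∈ Γ` the set `{ξ : ξ f ≤ a}` is weak-star closed and contains `A`, hence contains
its weak-star closure; so for every such `ξ`, `f x - a ≤ (x - ξ) f ≤ ‖x - ξ‖_F`. The remaining
term `0` of `φ` is handled by `‖·‖_F ≥ 0`, which holds because `S_F` is symmetric.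
-/

/-- The weak-star topology `σ(X**, X*)` on the bidual of `X`. -/
noncomputable def wstarTopology (X : Type*) [NormedAddCommGroup X] [NormedSpace ℝ X] :
    TopologicalSpace ((X →L[ℝ] ℝ) →L[ℝ] ℝ) :=
  TopologicalSpace.induced (fun (ξ : (X →L[ℝ] ℝ) →L[ℝ] ℝ) (f : X →L[ℝ] ℝ) => ξ f)
    Pi.topologicalSpace

theorem Real.sSup_nonneg_of_neg_mem {s : Set ℝ} (hs : ∀ t ∈ s, -t ∈ s) : 0 ≤ sSup s := by
  -- `sSup` is `0` on empty and on unbounded sets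
  by_cases hbdd : BddAbove s
  · rcases s.eq_empty_or_nonempty with rfl | ⟨t, ht⟩
    · simp
    · have := le_csSup hbdd ht
      have := le_csSup hbdd (hs t ht)
      linarith
  · simp [Real.sSup_of_not_bddAbove hbdd]

section SupOnSphere

variable {E : Type*} [NormedAddCommGroup E] [NormedSpace ℝ E]

/-- The seminorm `‖ξ‖_F = sup {ξ f : f ∈ S_F}` of the statement. -/
noncomputable def supOnSphere (F : Submodule ℝ E) (ξ : E →L[ℝ] ℝ) : ℝ :=
  sSup {t : ℝ | ∃ f ∈ F, ‖f‖ = 1 ∧ t = ξ f}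

theorem le_supOnSphere (F : Submodule ℝ E) (ξ : E →L[ℝ] ℝ) {f : E} (hfF : f ∈ F)
    (hf : ‖f‖ = 1) : ξ f ≤ supOnSphere F ξ := by
  refine le_csSup ⟨‖ξ‖, ?_⟩ ⟨f, hfF, hf, rfl⟩
  rintro _ ⟨g, -, hg, rfl⟩
  simpa [hg] using (le_abs_self (ξ g)).trans (ξ.le_opNorm g)

theorem supOnSphere_nonneg (F : Submodule ℝ E) (ξ : E →L[ℝ] ℝ) : 0 ≤ supOnSphere F ξ := by
  refine Real.sSup_nonneg_of_neg_mem ?_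
  rintro _ ⟨f, hfF, hf, rfl⟩
  exact ⟨-f, F.neg_mem hfF, by rw [norm_neg, hf], (map_neg ξ f).symm⟩

end SupOnSphere

theorem continuous_wstarTopology_eval {X : Type*} [NormedAddCommGroup X] [NormedSpace ℝ X]
    (f : X →L[ℝ] ℝ) :
    @Continuous _ _ (wstarTopology X) _ fun ξ : (X →L[ℝ] ℝ) →L[ℝ] ℝ => ξ f :=
  letI := wstarTopology X
  (continuous_apply f).comp continuous_induced_dom

theorem apply_le_of_mem_wstarClosure {X : Type*} [NormedAddCommGroup X] [NormedSpace ℝ X]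
    {A : Set X} {ξ : (X →L[ℝ] ℝ) →L[ℝ] ℝ}
    (hξ : ξ ∈ @closure _ (wstarTopology X) (NormedSpace.inclusionInDoubleDual ℝ X '' A))
    {f : X →L[ℝ] ℝ} {a : ℝ} (hfa : A ∩ {y : X | f y > a} = ∅) : ξ f ≤ a := by
  let := wstarTopology X
  refine closure_minimal ?_ (isClosed_Iic.preimage (continuous_wstarTopology_eval f)) hξ
  rintro _ ⟨y, hy, rfl⟩
  exact not_lt.mp fun h => Set.eq_empty_iff_forall_notMem.mp hfa y ⟨hy, (h : f y > a)⟩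

theorem statement6_general (X : Type*) [NormedAddCommGroup X] [NormedSpace ℝ X]
    (F : Subspace ℝ (X →L[ℝ] ℝ))
    (A : Set X) (hA : A.Nonempty)
    (Γ : Set ((X →L[ℝ] ℝ) × ℝ))
    (hΓ : Γ = {p : (X →L[ℝ] ℝ) × ℝ | p.1 ∈ F ∧ ‖p.1‖ = 1 ∧ A ∩ {y : X | p.1 y > p.2} = ∅})
    (φ ψ : X → ℝ)
    (hφ : ∀ x : X, φ x = sSup ({r : ℝ | ∃ p ∈ Γ, r = p.1 x - p.2} ∪ {0}))
    (hψ : ∀ x : X, ψ x = sInf {r : ℝ |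
      ∃ ξ ∈ @closure _ (wstarTopology X) (NormedSpace.inclusionInDoubleDual ℝ X '' A),
        r = sSup {t : ℝ | ∃ f ∈ F, ‖f‖ = 1 ∧
          t = (NormedSpace.inclusionInDoubleDual ℝ X x - ξ) f}})
    (x : X) :
    φ x ≤ ψ x := by
  set J := NormedSpace.inclusionInDoubleDual ℝ X
  obtain ⟨x₀, hx₀⟩ := hA
  rw [hφ, hψ]
  refine le_csInf ⟨_, J x₀, @subset_closure _ (wstarTopology X) _ _ ⟨x₀, hx₀, rfl⟩, rfl⟩ ?_
  rintro _ ⟨ξ, hξ, rfl⟩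
  refine csSup_le ⟨0, Or.inr rfl⟩ ?_
  rintro _ (⟨⟨f, a⟩, hfa, rfl⟩ | rfl)
  · rw [hΓ] at hfa
    obtain ⟨hfF, hf, hdisj⟩ := hfa
    have hξf : ξ f ≤ a := apply_le_of_mem_wstarClosure hξ hdisj
    have hsup : (J x - ξ) f ≤ supOnSphere F (J x - ξ) := le_supOnSphere F _ hfF hf
    have hJ : J x f = f x := rfl
    simp only [sub_apply, hJ] at hsup
    show f x - a ≤ supOnSphere F (J x - ξ)
    linarith
  · exact supOnSphere_nonneg F (J x - ξ)

/-- For every `x ∈ X`, `φ(x) ≤ ψ(x)`, where `φ` is the supremum function associated to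
`Γ = {(f,a) ∈ S_F × ℝ : A ∩ H_{f,a} = ∅}` and `ψ` is the `F`-distance from `x` to `A`. -/
theorem statement6 (X : Type*) [NormedAddCommGroup X] [NormedSpace ℝ X] [CompleteSpace X]
    (F : Subspace ℝ (X →L[ℝ] ℝ)) (hF : F ≠ ⊥)
    (A : Set X) (hA : A.Nonempty) (hAconv : Convex ℝ A) (hAbdd : Bornology.IsBounded A)
    (Γ : Set ((X →L[ℝ] ℝ) × ℝ))
    (hΓ : Γ = {p : (X →L[ℝ] ℝ) × ℝ | p.1 ∈ F ∧ ‖p.1‖ = 1 ∧ A ∩ {y : X | p.1 y > p.2} = ∅})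
    (φ ψ : X → ℝ)
    (hφ : ∀ x : X, φ x = sSup ({r : ℝ | ∃ p ∈ Γ, r = p.1 x - p.2} ∪ {0}))
    (hψ : ∀ x : X, ψ x = sInf {r : ℝ |
      ∃ ξ ∈ @closure _ (wstarTopology X) (NormedSpace.inclusionInDoubleDual ℝ X '' A),
        r = sSup {t : ℝ | ∃ f ∈ F, ‖f‖ = 1 ∧
          t = (NormedSpace.inclusionInDoubleDual ℝ X x - ξ) f}})
    (x : X) :
    φ x ≤ ψ x :=
  statement6_general X F A hA Γ hΓ φ ψ hφ hψ x
end

section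
/- For every x ∈ X, ψ(x) ≤ φ(x); consequently the F-distance ψ from x to A coincides with the function φ associated to Γ = { (f,a) ∈ S_F × ℝ : A ∩ H_{f,a} = ∅ }. -/
theorem exists_linearMap_le_and_le_on_submodule {E : Type*} [AddCommGroup E] [Module ℝ E]
    {p h : E → ℝ} (p_hom : ∀ c : ℝ, 0 < c → ∀ x, p (c • x) = c * p x)
    (p_add : ∀ x y, p (x + y) ≤ p x + p y) (h_hom : ∀ c : ℝ, 0 < c → ∀ x, h (c • x) = c * h x)
    (h_add : ∀ x y, h (x + y) ≤ h x + h y) {F : Submodule ℝ E}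
    (hph : ∀ f ∈ F, 0 ≤ p f + h (-f)) :
    ∃ ξ : E →ₗ[ℝ] ℝ, (∀ x, ξ x ≤ p x) ∧ ∀ f ∈ F, ξ f ≤ h f := by
  have map_zero_of_hom (q : E → ℝ) (hq : ∀ c : ℝ, 0 < c → ∀ x, q (c • x) = c * q x) : q 0 = 0 := by
    have h2 := hq 2 two_pos 0
    rw [smul_zero] at h2
    linarith
  have p_zero := map_zero_of_hom p p_hom
  have h_zero := map_zero_of_hom h h_hom
  -- Hahn–Banach for `(x, y) ↦ p x + h y` on `E × E`, extending zero from `{(f, -f) | f ∈ F}`.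
  let D : Submodule ℝ (E × E) := F.map (LinearMap.prod LinearMap.id (-LinearMap.id))
  obtain ⟨Λ, hΛD, hΛN⟩ := exists_extension_of_le_sublinear ⟨D, 0⟩ (fun z => p z.1 + h z.2)
    (fun c hc z => by simp only [Prod.smul_fst, Prod.smul_snd, p_hom c hc, h_hom c hc]; ring)
    (fun z w => by simp only [Prod.fst_add, Prod.snd_add]; linarith [p_add z.1 w.1, h_add z.2 w.2])
    (by rintro ⟨_, f, hf, rfl⟩; simpa using hph f hf)
  refine ⟨Λ.comp (LinearMap.inl ℝ E E), fun x => by simpa [h_zero] using hΛN (x, 0),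
    fun f hf => ?_⟩
  have hΛf : Λ (f, -f) = 0 := by simpa using hΛD ⟨(f, -f), f, hf, rfl⟩
  have hΛsplit : Λ (f, -f) = Λ (f, 0) - Λ (0, f) := by rw [← map_sub]; simp
  have hΛ0f : Λ (0, f) ≤ h f := by simpa [p_zero] using hΛN (0, f)
  simp only [LinearMap.comp_apply, LinearMap.inl_apply]
  linarith

theorem WeakBilin.mem_closure_iff_forall_le {E F : Type*} [AddCommGroup E] [Module ℝ E]
    [AddCommGroup F] [Module ℝ F] {B : E →ₗ[ℝ] F →ₗ[ℝ] ℝ} {s : Set (WeakBilin B)}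
    (hs : Convex ℝ s) {x : WeakBilin B} :
    x ∈ closure s ↔ ∀ y a, (∀ z ∈ s, B z y ≤ a) → B x y ≤ a := by
  refine ⟨fun hx y a hle => ?_, fun h => ?_⟩
  · exact closure_minimal hle (isClosed_le (WeakBilin.eval_continuous B y) continuous_const) hx
  · by_contra hx
    obtain ⟨l, u, hlu, hux⟩ := geometric_hahn_banach_closed_point hs.closure isClosed_closure hx
    -- every continuous functional on `WeakBilin B` is `B · y` for some `y`
    obtain ⟨y, rfl⟩ := LinearMap.dualEmbedding_surjective B l
    exact hux.not_ge (h y u fun z hz => (hlu z (subset_closure hz)).le)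

theorem sSup_unitSphere_apply_nonneg {E : Type*} [NormedAddCommGroup E] [NormedSpace ℝ E]
    (F : Submodule ℝ E) (ξ : E →L[ℝ] ℝ) : 0 ≤ sSup {t | ∃ f ∈ F, ‖f‖ = 1 ∧ t = ξ f} :=
  Real.sSup_nonneg_of_neg_mem <| by
    rintro _ ⟨f, hf, hf1, rfl⟩
    exact ⟨-f, F.neg_mem hf, by rw [norm_neg, hf1], by rw [map_neg]⟩

theorem bddAbove_unitSphere_apply {E : Type*} [NormedAddCommGroup E] [NormedSpace ℝ E]
    (F : Submodule ℝ E) (ξ : E →L[ℝ] ℝ) : BddAbove {t | ∃ f ∈ F, ‖f‖ = 1 ∧ t = ξ f} := by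
  refine ⟨‖ξ‖, ?_⟩
  rintro _ ⟨f, -, hf1, rfl⟩
  simpa [hf1] using (le_abs_self _).trans (ξ.le_opNorm f)

section

variable {X : Type*} [NormedAddCommGroup X] [NormedSpace ℝ X] {A : Set X}

local notation "J" => NormedSpace.inclusionInDoubleDual ℝ X

theorem mem_wstar_closure_image_iff (hA : Convex ℝ A) {ξ : (X →L[ℝ] ℝ) →L[ℝ] ℝ} :
    ξ ∈ @closure _ (wstarTopology X) (J '' A) ↔
      ∀ (g : X →L[ℝ] ℝ) (a : ℝ), (∀ y ∈ A, g y ≤ a) → ξ g ≤ a := by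
  have hconv : Convex ℝ (J '' A) :=
    hA.linear_image (NormedSpace.inclusionInDoubleDual ℝ X).toLinearMap
  exact (WeakBilin.mem_closure_iff_forall_le (B := topDualPairing ℝ (X →L[ℝ] ℝ)) hconv
    (x := ξ)).trans (forall₂_congr fun g a => imp_congr_left Set.forall_mem_image)

theorem sSup_image_smul_of_nonneg (g : X →L[ℝ] ℝ) {t : ℝ} (ht : 0 ≤ t) :
    sSup ((t • g) '' A) = t * sSup (g '' A) := by
  rw [← smul_eq_mul, ← Real.sSup_smul_of_nonneg ht, ← Set.image_smul, Set.image_image]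
  rfl

theorem sSup_image_add_le (hA : A.Nonempty) (hAb : Bornology.IsBounded A) (f g : X →L[ℝ] ℝ) :
    sSup ((f + g) '' A) ≤ sSup (f '' A) + sSup (g '' A) := by
  refine csSup_le (hA.image _) ?_
  rintro _ ⟨y, hy, rfl⟩
  exact add_le_add (le_csSup (f.lipschitz.isBounded_image hAb).bddAbove ⟨y, hy, rfl⟩)
    (le_csSup (g.lipschitz.isBounded_image hAb).bddAbove ⟨y, hy, rfl⟩)

theorem sSup_image_le_mul_norm (hA : A.Nonempty) {C : ℝ} (hC : ∀ y ∈ A, ‖y‖ ≤ C)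
    (g : X →L[ℝ] ℝ) : sSup (g '' A) ≤ C * ‖g‖ := by
  refine csSup_le (hA.image _) ?_
  rintro _ ⟨y, hy, rfl⟩
  calc g y ≤ ‖g‖ * ‖y‖ := (le_abs_self _).trans (g.le_opNorm y)
    _ ≤ ‖g‖ * C := by gcongr; exact hC y hy
    _ = C * ‖g‖ := mul_comm _ _

theorem sub_norm_mul_le_sSup_image {F : Submodule ℝ (X →L[ℝ] ℝ)} {x : X} {Φ : ℝ}
    (hΦ : ∀ f ∈ F, ‖f‖ = 1 → f x - sSup (f '' A) ≤ Φ) {f : X →L[ℝ] ℝ} (hf : f ∈ F) :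
    f x - ‖f‖ * Φ ≤ sSup (f '' A) := by
  rcases eq_or_ne f 0 with rfl | hf0
  · simpa using Real.sSup_nonneg (s := (0 : X →L[ℝ] ℝ) '' A) (by rintro _ ⟨y, -, rfl⟩; simp)
  set u := ‖f‖⁻¹ • f
  have hfu : ‖f‖ • u = f := smul_inv_smul₀ (norm_ne_zero_iff.2 hf0) f
  calc f x - ‖f‖ * Φ = ‖f‖ * (u x - Φ) := by
        nth_rewrite 1 [← hfu]
        rw [smul_apply, smul_eq_mul, mul_sub]
    _ ≤ ‖f‖ * sSup (u '' A) := by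
        gcongr
        linarith [hΦ u (F.smul_mem _ hf) (norm_smul_inv_norm hf0)]
    _ = sSup (f '' A) := by rw [← sSup_image_smul_of_nonneg u (norm_nonneg f), hfu]

theorem exists_mem_wstar_closure_sub_le (hA : A.Nonempty) (hAconv : Convex ℝ A)
    (hAbdd : Bornology.IsBounded A) {F : Submodule ℝ (X →L[ℝ] ℝ)} {x : X} {Φ : ℝ} (hΦ0 : 0 ≤ Φ)
    (hΦ : ∀ f ∈ F, ‖f‖ = 1 → f x - sSup (f '' A) ≤ Φ) :
    ∃ ξ ∈ @closure _ (wstarTopology X) (J '' A), ∀ f ∈ F, ‖f‖ = 1 → (J x - ξ) f ≤ Φ := by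
  obtain ⟨ξ, hξA, hξF⟩ := exists_linearMap_le_and_le_on_submodule
    (p := fun g : X →L[ℝ] ℝ => sSup (g '' A)) (h := fun g => g x + ‖g‖ * Φ) (F := F)
    (fun c hc g => by exact sSup_image_smul_of_nonneg g hc.le) (sSup_image_add_le hA hAbdd)
    (fun c hc g => by simp only [smul_apply, smul_eq_mul, norm_smul,
      Real.norm_of_nonneg hc.le]; ring)
    (fun f g => by simp only [add_apply]; nlinarith [norm_add_le f g])
    (fun f hf => by simp only [neg_apply, norm_neg]; linarith [sub_norm_mul_le_sSup_image hΦ hf])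
  obtain ⟨C, hC⟩ := hAbdd.exists_norm_le
  have hξC (g) : ξ g ≤ C * ‖g‖ := (hξA g).trans (sSup_image_le_mul_norm hA hC g)
  let Ξ := ξ.mkContinuous C fun g => abs_le.2
    ⟨by linarith [map_neg ξ g ▸ norm_neg g ▸ hξC (-g)], hξC g⟩
  refine ⟨Ξ, (mem_wstar_closure_image_iff hAconv).2 fun g a hga =>
    (hξA g).trans (csSup_le (hA.image _) (Set.forall_mem_image.2 hga)), fun f hf hf1 => ?_⟩
  have := hξF (-f) (F.neg_mem hf)
  simp only [map_neg, neg_apply, norm_neg, hf1, one_mul] at this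
  simp only [sub_apply, NormedSpace.dual_def]
  change f x - ξ f ≤ Φ
  linarith

theorem sInf_wstar_dist_le (hA : A.Nonempty) (hAconv : Convex ℝ A)
    (hAbdd : Bornology.IsBounded A) {F : Submodule ℝ (X →L[ℝ] ℝ)} {x : X} {Φ : ℝ} (hΦ0 : 0 ≤ Φ)
    (hΦ : ∀ f ∈ F, ‖f‖ = 1 → f x - sSup (f '' A) ≤ Φ) :
    sInf {r | ∃ ξ ∈ @closure _ (wstarTopology X) (J '' A),
      r = sSup {t | ∃ f ∈ F, ‖f‖ = 1 ∧ t = (J x - ξ) f}} ≤ Φ := by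
  obtain ⟨ξ, hξ, hξx⟩ := exists_mem_wstar_closure_sub_le hA hAconv hAbdd hΦ0 hΦ
  refine csInf_le_of_le ⟨0, ?_⟩ ⟨ξ, hξ, rfl⟩ (Real.sSup_le ?_ hΦ0)
  · rintro _ ⟨η, -, rfl⟩
    exact sSup_unitSphere_apply_nonneg F _
  · rintro _ ⟨f, hf, hf1, rfl⟩
    exact hξx f hf hf1

variable {F : Submodule ℝ (X →L[ℝ] ℝ)} {Γ : Set ((X →L[ℝ] ℝ) × ℝ)}

theorem bddAbove_gaps {x₀ : X} (hx₀ : x₀ ∈ A) (hΓ : ∀ p ∈ Γ, ‖p.1‖ = 1 ∧ ∀ y ∈ A, p.1 y ≤ p.2)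
    (x : X) : BddAbove ({r | ∃ p ∈ Γ, r = p.1 x - p.2} ∪ {0}) := by
  refine ⟨‖x - x₀‖, ?_⟩
  rintro _ (⟨⟨f, a⟩, hp, rfl⟩ | rfl)
  · obtain ⟨hf1, hfA⟩ := hΓ _ hp
    have := (le_abs_self _).trans (f.le_opNorm (x - x₀))
    simp only [map_sub, hf1, one_mul] at this ⊢
    linarith [hfA x₀ hx₀]
  · exact norm_nonneg _

theorem sSup_gaps_le_of_mem_wstar_closure (hAconv : Convex ℝ A)
    (hΓ : ∀ p ∈ Γ, p.1 ∈ F ∧ ‖p.1‖ = 1 ∧ ∀ y ∈ A, p.1 y ≤ p.2)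
    {ξ : (X →L[ℝ] ℝ) →L[ℝ] ℝ} (hξ : ξ ∈ @closure _ (wstarTopology X) (J '' A)) (x : X) :
    sSup ({r | ∃ p ∈ Γ, r = p.1 x - p.2} ∪ {0}) ≤
      sSup {t | ∃ f ∈ F, ‖f‖ = 1 ∧ t = (J x - ξ) f} := by
  refine csSup_le ⟨0, Or.inr rfl⟩ ?_
  rintro _ (⟨⟨f, a⟩, hp, rfl⟩ | rfl)
  · obtain ⟨hf, hf1, hfA⟩ := hΓ _ hp
    have hξa : ξ f ≤ a := (mem_wstar_closure_image_iff hAconv).1 hξ f a hfA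
    refine le_trans ?_ (le_csSup (bddAbove_unitSphere_apply F _) ⟨f, hf, hf1, rfl⟩)
    simp only [sub_apply, NormedSpace.dual_def]
    linarith
  · exact sSup_unitSphere_apply_nonneg F _

end

theorem statement7_general (X : Type*) [NormedAddCommGroup X] [NormedSpace ℝ X]
    (F : Subspace ℝ (X →L[ℝ] ℝ))
    (A : Set X) (hA : A.Nonempty) (hAconv : Convex ℝ A) (hAbdd : Bornology.IsBounded A)
    (Γ : Set ((X →L[ℝ] ℝ) × ℝ))
    (hΓ : Γ = {p : (X →L[ℝ] ℝ) × ℝ | p.1 ∈ F ∧ ‖p.1‖ = 1 ∧ A ∩ {y : X | p.1 y > p.2} = ∅})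
    (φ ψ : X → ℝ)
    (hφ : ∀ x : X, φ x = sSup ({r : ℝ | ∃ p ∈ Γ, r = p.1 x - p.2} ∪ {0}))
    (hψ : ∀ x : X, ψ x = sInf {r : ℝ |
      ∃ ξ ∈ @closure _ (wstarTopology X) (NormedSpace.inclusionInDoubleDual ℝ X '' A),
        r = sSup {t : ℝ | ∃ f ∈ F, ‖f‖ = 1 ∧
          t = (NormedSpace.inclusionInDoubleDual ℝ X x - ξ) f}})
    :
    (∀ x : X, ψ x ≤ φ x) ∧ ψ = φ := by
  obtain ⟨x₀, hx₀⟩ := hA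
  have hΓA : ∀ p ∈ Γ, p.1 ∈ F ∧ ‖p.1‖ = 1 ∧ ∀ y ∈ A, p.1 y ≤ p.2 := by
    rw [hΓ]
    rintro p ⟨hf, hf1, hpA⟩
    exact ⟨hf, hf1, fun y hy => not_lt.1 fun h => hpA.subset ⟨hy, h⟩⟩
  have hσΓ : ∀ f ∈ F, ‖f‖ = 1 → (f, sSup (f '' A)) ∈ Γ := fun f hf hf1 => by
    rw [hΓ]
    refine ⟨hf, hf1, Set.eq_empty_iff_forall_notMem.2 fun y hy => ?_⟩
    exact (le_csSup (f.lipschitz.isBounded_image hAbdd).bddAbove ⟨y, hy.1, rfl⟩).not_gt hy.2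
  have hbdd := bddAbove_gaps hx₀ fun p hp => (hΓA p hp).2
  have hψφ (x : X) : ψ x ≤ φ x := by
    rw [hψ]
    refine sInf_wstar_dist_le ⟨x₀, hx₀⟩ hAconv hAbdd (hφ x ▸ le_csSup (hbdd x) (Or.inr rfl)) ?_
    exact fun f hf hf1 => hφ x ▸ le_csSup (hbdd x) (Or.inl ⟨_, hσΓ f hf hf1, rfl⟩)
  refine ⟨hψφ, funext fun x => (hψφ x).antisymm ?_⟩
  rw [hφ, hψ]
  refine le_csInf ⟨_, _, @subset_closure _ (wstarTopology X) _ _ (Set.mem_image_of_mem _ hx₀),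
    rfl⟩ ?_
  rintro _ ⟨ξ, hξ, rfl⟩
  exact sSup_gaps_le_of_mem_wstar_closure hAconv hΓA hξ x

/-- For every `x ∈ X`, `ψ(x) ≤ φ(x)`; consequently the `F`-distance `ψ` coincides with
the function `φ` associated to `Γ = {(f,a) ∈ S_F × ℝ : A ∩ H_{f,a} = ∅}`. -/
theorem statement7 (X : Type*) [NormedAddCommGroup X] [NormedSpace ℝ X] [CompleteSpace X]
    (F : Subspace ℝ (X →L[ℝ] ℝ)) (hF : F ≠ ⊥)
    (A : Set X) (hA : A.Nonempty) (hAconv : Convex ℝ A) (hAbdd : Bornology.IsBounded A)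
    (Γ : Set ((X →L[ℝ] ℝ) × ℝ))
    (hΓ : Γ = {p : (X →L[ℝ] ℝ) × ℝ | p.1 ∈ F ∧ ‖p.1‖ = 1 ∧ A ∩ {y : X | p.1 y > p.2} = ∅})
    (φ ψ : X → ℝ)
    (hφ : ∀ x : X, φ x = sSup ({r : ℝ | ∃ p ∈ Γ, r = p.1 x - p.2} ∪ {0}))
    (hψ : ∀ x : X, ψ x = sInf {r : ℝ |
      ∃ ξ ∈ @closure _ (wstarTopology X) (NormedSpace.inclusionInDoubleDual ℝ X '' A),
        r = sSup {t : ℝ | ∃ f ∈ F, ‖f‖ = 1 ∧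
          t = (NormedSpace.inclusionInDoubleDual ℝ X x - ξ) f}})
    :
    (∀ x : X, ψ x ≤ φ x) ∧ ψ = φ :=
  statement7_general X F A hA hAconv hAbdd Γ hΓ φ ψ hφ hψ
end

section
/- Let X be a real Banach space, let (B_n)_{n<ω} be a decreasing sequence of w*-compact subsets of X* with B = ⋂_{n<ω} B_n, and let 𝒰 be a family of w*-open subsets of X*. For a subset C ⊆ X* put Γ(C) = { (x,a) ∈ S_X × (0,1) : H_{x,a} ∩ C ⊆ U for some U ∈ 𝒰 } and φ_C(h) = sup({ h(x) − a : (x,a) ∈ Γ(C) } ∪ {0}). Then for every h ∈ B, the sequence (φ_{B_n}(h))_{n<ω} is non-decreasing and φ_B(h) = lim_{n→∞} φ_{B_n}(h). -/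
/-!
Shrinking `C` enlarges `Γ(C)`, so `φ_{B_n}(h)` increases and is bounded by `φ_B(h)`.
Conversely, if `H_{x,a} ∩ B ⊆ U` and `a < a' < 1`, the compact sets
`B_n ∩ {f : f(x) ≥ a'}` decrease to a subset of `U`, so one of them already lies in `U`;
thus `(x,a') ∈ Γ(B_n)`, and letting `a' → a` gives `φ_B(h) ≤ sup_n φ_{B_n}(h)`.
-/

open Set Filter Topology

namespace WeakDual

variable {X : Type*} [NormedAddCommGroup X] [NormedSpace ℝ X]

/-- `Γ(C)`; `coveredHalfSpaceGauge 𝒰 C` below is `φ_C`. -/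
def coveredHalfSpaces (𝒰 : Set (Set (WeakDual ℝ X))) (C : Set (WeakDual ℝ X)) :
    Set (X × ℝ) :=
  {p | ‖p.1‖ = 1 ∧ p.2 ∈ Ioo (0 : ℝ) 1 ∧
    ∃ U ∈ 𝒰, {f : WeakDual ℝ X | f p.1 > p.2} ∩ C ⊆ U}

def coveredHalfSpaceGaps (𝒰 : Set (Set (WeakDual ℝ X))) (C : Set (WeakDual ℝ X))
    (h : WeakDual ℝ X) : Set ℝ :=
  {r | ∃ p ∈ coveredHalfSpaces 𝒰 C, r = h p.1 - p.2} ∪ {0}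

noncomputable def coveredHalfSpaceGauge (𝒰 : Set (Set (WeakDual ℝ X)))
    (C : Set (WeakDual ℝ X)) (h : WeakDual ℝ X) : ℝ :=
  sSup (coveredHalfSpaceGaps 𝒰 C h)

variable {𝒰 : Set (Set (WeakDual ℝ X))}

theorem coveredHalfSpaces_antitone : Antitone (coveredHalfSpaces 𝒰) := by
  rintro C D hCD p ⟨hx, ha, U, hU, hsub⟩
  exact ⟨hx, ha, U, hU, fun f hf => hsub ⟨hf.1, hCD hf.2⟩⟩

theorem sub_le_norm_of_mem_coveredHalfSpaces {C : Set (WeakDual ℝ X)} {p : X × ℝ}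
    (hp : p ∈ coveredHalfSpaces 𝒰 C) (h : WeakDual ℝ X) :
    h p.1 - p.2 ≤ ‖toStrongDual h‖ := by
  obtain ⟨hx, ha, -⟩ := hp
  have hbound : h p.1 ≤ ‖toStrongDual h‖ :=
    calc h p.1 ≤ ‖toStrongDual h p.1‖ := le_abs_self _
      _ ≤ ‖toStrongDual h‖ * ‖p.1‖ := (toStrongDual h).le_opNorm p.1
      _ = ‖toStrongDual h‖ := by rw [hx, mul_one]
  linarith [ha.1]

theorem bddAbove_coveredHalfSpaceGaps (C : Set (WeakDual ℝ X)) (h : WeakDual ℝ X) :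
    BddAbove (coveredHalfSpaceGaps 𝒰 C h) := by
  refine ⟨max ‖toStrongDual h‖ 0, ?_⟩
  rintro r (⟨p, hp, rfl⟩ | rfl)
  · exact (sub_le_norm_of_mem_coveredHalfSpaces hp h).trans (le_max_left _ _)
  · exact le_max_right _ _

theorem zero_le_coveredHalfSpaceGauge (C : Set (WeakDual ℝ X)) (h : WeakDual ℝ X) :
    0 ≤ coveredHalfSpaceGauge 𝒰 C h :=
  le_csSup (bddAbove_coveredHalfSpaceGaps C h) (Or.inr rfl)

theorem coveredHalfSpaceGauge_antitone (h : WeakDual ℝ X) :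
    Antitone fun C => coveredHalfSpaceGauge 𝒰 C h := by
  intro C D hCD
  refine csSup_le_csSup (bddAbove_coveredHalfSpaceGaps C h) ⟨0, Or.inr rfl⟩ ?_
  rintro r (⟨p, hp, rfl⟩ | rfl)
  · exact Or.inl ⟨p, coveredHalfSpaces_antitone hCD hp, rfl⟩
  · exact Or.inr rfl

theorem exists_mem_coveredHalfSpaces_of_mem_iInter {Bseq : ℕ → Set (WeakDual ℝ X)}
    (hcomp : ∀ n, IsCompact (Bseq n)) (hanti : Antitone Bseq) (hopen : ∀ U ∈ 𝒰, IsOpen U)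
    {x : X} {a a' : ℝ} (hp : (x, a) ∈ coveredHalfSpaces 𝒰 (⋂ n, Bseq n)) (haa' : a < a')
    (ha' : a' < 1) : ∃ n, (x, a') ∈ coveredHalfSpaces 𝒰 (Bseq n) := by
  obtain ⟨hx, ⟨ha0, -⟩, U, hU, hsub⟩ := hp
  set K : ℕ → Set (WeakDual ℝ X) := fun n => Bseq n ∩ {f | a' ≤ f x}
  have hclosed : IsClosed {f : WeakDual ℝ X | a' ≤ f x} :=
    isClosed_le continuous_const (eval_continuous x)
  have hKcomp (n : ℕ) : IsCompact (K n) := (hcomp n).inter_right hclosed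
  have hKanti : Antitone K := fun m n hmn => inter_subset_inter_left _ (hanti hmn)
  have hKU : ∀ f ∈ ⋂ n, K n, U ∈ 𝓝 f := by
    intro f hf
    have hfK := mem_iInter.mp hf
    refine (hopen U hU).mem_nhds (hsub ⟨haa'.trans_le (hfK 0).2, ?_⟩)
    exact mem_iInter.mpr fun n => (hfK n).1
  obtain ⟨n, hn⟩ := exists_subset_nhds_of_isCompact hKanti.directed_ge hKcomp hKU
  refine ⟨n, hx, ⟨ha0.trans haa', ha'⟩, U, hU, fun f hf => hn ⟨hf.2, ?_⟩⟩
  exact show a' ≤ f x from le_of_lt hf.1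

theorem coveredHalfSpaceGauge_iInter_le_iSup {Bseq : ℕ → Set (WeakDual ℝ X)}
    (hcomp : ∀ n, IsCompact (Bseq n)) (hanti : Antitone Bseq) (hopen : ∀ U ∈ 𝒰, IsOpen U)
    (h : WeakDual ℝ X) :
    coveredHalfSpaceGauge 𝒰 (⋂ n, Bseq n) h ≤
      ⨆ n, coveredHalfSpaceGauge 𝒰 (Bseq n) h := by
  set L := ⨆ n, coveredHalfSpaceGauge 𝒰 (Bseq n) h
  have hbdd : BddAbove (range fun n => coveredHalfSpaceGauge 𝒰 (Bseq n) h) :=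
    ⟨coveredHalfSpaceGauge 𝒰 (⋂ n, Bseq n) h,
      forall_mem_range.mpr fun n => coveredHalfSpaceGauge_antitone h (iInter_subset Bseq n)⟩
  refine csSup_le ⟨0, Or.inr rfl⟩ ?_
  rintro r (⟨⟨x, a⟩, hp, rfl⟩ | rfl)
  · have ha1 : a < 1 := hp.2.1.2
    suffices ∀ c, a < c → h x - L ≤ c by linarith [le_of_forall_gt_imp_ge_of_dense this]
    intro c hac
    obtain ⟨a', haa', ha'⟩ := exists_between (lt_min hac ha1)
    obtain ⟨n, hn⟩ := exists_mem_coveredHalfSpaces_of_mem_iInter hcomp hanti hopen hp haa'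
      (ha'.trans_le (min_le_right _ _))
    have hgap : h x - a' ≤ L :=
      (le_csSup (bddAbove_coveredHalfSpaceGaps _ h) (Or.inl ⟨_, hn, rfl⟩)).trans
        (le_ciSup hbdd n)
    linarith [min_le_left c 1]
  · exact (zero_le_coveredHalfSpaceGauge _ h).trans (le_ciSup hbdd 0)

end WeakDual

open WeakDual in
theorem statement10_general (X : Type*) [NormedAddCommGroup X] [NormedSpace ℝ X]
    (Bseq : ℕ → Set (WeakDual ℝ X)) (hcomp : ∀ n, IsCompact (Bseq n))
    (hdec : ∀ n, Bseq (n + 1) ⊆ Bseq n)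
    (B : Set (WeakDual ℝ X)) (hB : B = ⋂ n, Bseq n)
    (𝒰 : Set (Set (WeakDual ℝ X))) (hopen : ∀ U ∈ 𝒰, IsOpen U)
    (Γ : Set (WeakDual ℝ X) → Set (X × ℝ))
    (hΓ : ∀ C : Set (WeakDual ℝ X), Γ C = {p : X × ℝ | ‖p.1‖ = 1 ∧ p.2 ∈ Set.Ioo (0:ℝ) 1 ∧
      ∃ U ∈ 𝒰, {f : WeakDual ℝ X | f p.1 > p.2} ∩ C ⊆ U})
    (φ : Set (WeakDual ℝ X) → WeakDual ℝ X → ℝ)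
    (hφ : ∀ (C : Set (WeakDual ℝ X)) (h : WeakDual ℝ X),
      φ C h = sSup ({r : ℝ | ∃ p ∈ Γ C, r = h p.1 - p.2} ∪ {0}))
    (h : WeakDual ℝ X) :
    Monotone (fun n => φ (Bseq n) h) ∧
      Filter.Tendsto (fun n => φ (Bseq n) h) Filter.atTop (nhds (φ B h)) := by
  obtain rfl : Γ = coveredHalfSpaces 𝒰 := funext hΓ
  obtain rfl : φ = coveredHalfSpaceGauge 𝒰 := funext₂ hφ
  subst hB
  have hanti : Antitone Bseq := antitone_nat_of_succ_le hdec
  have hmono : Monotone fun n => coveredHalfSpaceGauge 𝒰 (Bseq n) h :=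
    (coveredHalfSpaceGauge_antitone h).comp hanti
  have hle (n : ℕ) :
      coveredHalfSpaceGauge 𝒰 (Bseq n) h ≤ coveredHalfSpaceGauge 𝒰 (⋂ n, Bseq n) h :=
    coveredHalfSpaceGauge_antitone h (iInter_subset Bseq n)
  have hsup :
      ⨆ n, coveredHalfSpaceGauge 𝒰 (Bseq n) h = coveredHalfSpaceGauge 𝒰 (⋂ n, Bseq n) h :=
    le_antisymm (ciSup_le hle) (coveredHalfSpaceGauge_iInter_le_iSup hcomp hanti hopen h)
  refine ⟨hmono, ?_⟩
  rw [← hsup]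
  exact tendsto_atTop_ciSup hmono ⟨_, forall_mem_range.mpr hle⟩

/-- For a decreasing sequence `(B n)` of weak-star compact subsets of `X*` with
intersection `B`, a family `𝒰` of weak-star open sets, and the associated functions
`φ_C(h) = sup({h(x) - a : (x,a) ∈ Γ(C)} ∪ {0})` with
`Γ(C) = {(x,a) ∈ S_X × (0,1) : H_{x,a} ∩ C ⊆ U for some U ∈ 𝒰}`, for every `h ∈ B` the
sequence `(φ_{B n}(h))` is non-decreasing and converges to `φ_B(h)`. -/
theorem statement10 (X : Type*) [NormedAddCommGroup X] [NormedSpace ℝ X] [CompleteSpace X]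
    (Bseq : ℕ → Set (WeakDual ℝ X)) (hcomp : ∀ n, IsCompact (Bseq n))
    (hdec : ∀ n, Bseq (n + 1) ⊆ Bseq n)
    (B : Set (WeakDual ℝ X)) (hB : B = ⋂ n, Bseq n)
    (𝒰 : Set (Set (WeakDual ℝ X))) (hopen : ∀ U ∈ 𝒰, IsOpen U)
    (Γ : Set (WeakDual ℝ X) → Set (X × ℝ))
    (hΓ : ∀ C : Set (WeakDual ℝ X), Γ C = {p : X × ℝ | ‖p.1‖ = 1 ∧ p.2 ∈ Set.Ioo (0:ℝ) 1 ∧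
      ∃ U ∈ 𝒰, {f : WeakDual ℝ X | f p.1 > p.2} ∩ C ⊆ U})
    (φ : Set (WeakDual ℝ X) → WeakDual ℝ X → ℝ)
    (hφ : ∀ (C : Set (WeakDual ℝ X)) (h : WeakDual ℝ X),
      φ C h = sSup ({r : ℝ | ∃ p ∈ Γ C, r = h p.1 - p.2} ∪ {0}))
    (h : WeakDual ℝ X) (hh : h ∈ B) :
    Monotone (fun n => φ (Bseq n) h) ∧
      Filter.Tendsto (fun n => φ (Bseq n) h) Filter.atTop (nhds (φ B h)) :=
  statement10_general X Bseq hcomp hdec B hB 𝒰 hopen Γ hΓ φ hφ h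
end

section
/- Let X be a real Banach space. If the dual X*, equipped with the w*-topology, has a G_δ-diagonal, then X is separable. -/
/-!
A `G_δ`-diagonal makes every point of `X*` a `G_δ`, in particular `{0} = ⋂ₙ Uₙ`. Each weak-star
neighbourhood `Uₙ` of `0` contains the annihilator of a finite set `Iₙ ⊆ X`, so a functional
vanishing on the countable set `D = ⋃ₙ Iₙ` is zero. By Hahn–Banach the span of `D` is then dense,
and `X` is separable.
-/

open Filter Topology Set

theorem IsGδ.singleton_of_isGδ_diagonal {X : Type*} [TopologicalSpace X]
    (h : IsGδ (diagonal X)) (x : X) : IsGδ ({x} : Set X) := by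
  have : ({x} : Set X) = (fun y => (y, x)) ⁻¹' diagonal X := by ext; simp
  exact this ▸ h.preimage (by fun_prop)

namespace WeakBilin

variable {𝕜 E F : Type*} [CommSemiring 𝕜] [TopologicalSpace 𝕜] [AddCommMonoid E] [Module 𝕜 E]
  [AddCommMonoid F] [Module 𝕜 F] (B : E →ₗ[𝕜] F →ₗ[𝕜] 𝕜)

theorem exists_finite_of_mem_nhds_zero {U : Set (WeakBilin B)} (hU : U ∈ 𝓝 0) :
    ∃ I : Set F, I.Finite ∧ {x : WeakBilin B | ∀ y ∈ I, B x y = 0} ⊆ U := by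
  rw [(⟨rfl⟩ : IsInducing fun (x : WeakBilin B) y => B x y).nhds_eq_comap, mem_comap] at hU
  obtain ⟨t, ht, htU⟩ := hU
  rw [nhds_pi, Filter.mem_pi] at ht
  obtain ⟨I, hI, w, hw, hwt⟩ := ht
  refine ⟨I, hI, fun x hx => htU (hwt fun y hy => ?_)⟩
  have h0 : B (0 : WeakBilin B) y = 0 := LinearMap.map_zero₂ B y
  simpa [hx y hy, h0] using mem_of_mem_nhds (hw y)

theorem exists_countable_separating_of_isGδ_singleton_zero (h : IsGδ ({0} : Set (WeakBilin B))) :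
    ∃ D : Set F, D.Countable ∧ ∀ x : WeakBilin B, (∀ y ∈ D, B x y = 0) → x = 0 := by
  obtain ⟨U, hUo, hU⟩ := isGδ_iff_eq_iInter_nat.mp h
  have hU0 : ∀ n, U n ∈ 𝓝 (0 : WeakBilin B) := fun n =>
    (hUo n).mem_nhds (mem_iInter.mp (hU ▸ rfl : (0 : WeakBilin B) ∈ ⋂ n, U n) n)
  choose I hI hIU using fun n => exists_finite_of_mem_nhds_zero B (hU0 n)
  refine ⟨⋃ n, I n, countable_iUnion fun n => (hI n).countable, fun x hx => ?_⟩
  have : x ∈ ⋂ n, U n :=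
    mem_iInter.mpr fun n => hIU n fun y hy => hx y (mem_iUnion_of_mem n hy)
  rwa [← hU] at this

end WeakBilin

section Normed

variable {𝕜 E : Type*} [RCLike 𝕜] [NormedAddCommGroup E] [NormedSpace 𝕜 E]

/-- A functional separating a point from the closure of `M` is pulled back from `E ⧸ closure M`. -/
theorem Submodule.topologicalClosure_eq_top_of_forall_dual_eq_zero (M : Submodule 𝕜 E)
    (h : ∀ f : StrongDual 𝕜 E, (∀ x ∈ M, f x = 0) → f = 0) : M.topologicalClosure = ⊤ := by
  set N := M.topologicalClosure
  have : IsClosed (N : Set E) := M.isClosed_topologicalClosure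
  by_contra hN
  obtain ⟨x, -, hx⟩ := SetLike.exists_of_lt (lt_top_iff_ne_top.mpr hN)
  obtain ⟨g, hg⟩ :=
    SeparatingDual.exists_ne_zero (R := 𝕜) (mt (Submodule.Quotient.mk_eq_zero N).mp hx)
  have hgN : g.comp N.mkQL = 0 := h _ fun y hy => by
    simp [(Submodule.Quotient.mk_eq_zero N).mpr (M.le_topologicalClosure hy)]
  exact hg (by simpa using congr($hgN x))

theorem separableSpace_of_countable_of_forall_dual_eq_zero (D : Set E) (hD : D.Countable)
    (h : ∀ f : StrongDual 𝕜 E, (∀ x ∈ D, f x = 0) → f = 0) :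
    TopologicalSpace.SeparableSpace E := by
  have hdense : (Submodule.span 𝕜 D).topologicalClosure = ⊤ :=
    Submodule.topologicalClosure_eq_top_of_forall_dual_eq_zero _ fun f hf =>
      h f fun x hx => hf x (Submodule.subset_span hx)
  have := (hD.isSeparable.span (R := 𝕜)).closure
  rw [← Submodule.topologicalClosure_coe, hdense, Submodule.top_coe] at this
  exact TopologicalSpace.isSeparable_univ_iff.mp this

end Normed

theorem statement13_general (X : Type*) [NormedAddCommGroup X] [NormedSpace ℝ X]
    (h : IsGδ (Set.diagonal (WeakDual ℝ X))) :
    TopologicalSpace.SeparableSpace X := by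
  obtain ⟨D, hD, hsep⟩ :=
    WeakBilin.exists_countable_separating_of_isGδ_singleton_zero _ (h.singleton_of_isGδ_diagonal 0)
  exact separableSpace_of_countable_of_forall_dual_eq_zero (𝕜 := ℝ) D hD hsep

/-- If the dual of a Banach space `X`, equipped with the weak-star topology, has a
`G_δ`-diagonal, then `X` is separable. -/
theorem statement13 (X : Type*) [NormedAddCommGroup X] [NormedSpace ℝ X] [CompleteSpace X]
    (h : IsGδ (Set.diagonal (WeakDual ℝ X))) :
    TopologicalSpace.SeparableSpace X :=
  statement13_general X h
end
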